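/- Let n ≥ 3 be an integer and let l_1, …, l_n ∈ ℕ ∪ {∞} satisfy l_i ≥ 3 for every i, with l_i = ∞ for at least one index i. If the curvature κ = 1 − n/2 + Σ_{i=1}^n 1/l_i (with 1/∞ = 0) is strictly negative, then κ ≤ −1/42. -/

import Mathlib

/-!
Deleting the infinigon, whose reciprocal is `0`, leaves `m = n - 1 ≥ 2` faces and
`κ = 1/2 - m/2 + Σ 1/lᵢ`, so it suffices to bound sums of `m` reciprocals that lie below
`(m - 1)/2`. For `m ≥ 4` even the trivial bound `1/lᵢ ≤ 1/3` leaves a gap of `1/6`. For `m = 3`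
not all three faces can be triangles, so the sum is at most `1/3 + 1/3 + 1/4`. For `m = 2` the
largest value of `1/p + 1/q` below `1/2` is `1/3 + 1/7 = 1/2 - 1/42`.
-/

/-- The reciprocal of an extended natural number, as a real number,
with the convention `1/∞ = 0`. -/
noncomputable def einv : ℕ∞ → ℝ
  | ⊤ => 0
  | (m : ℕ) => (m : ℝ)⁻¹

@[simp]
lemma einv_top : einv ⊤ = 0 := rfl

@[simp]
lemma einv_coe (k : ℕ) : einv k = (k : ℝ)⁻¹ := rfl

lemma einv_le_third {l : ℕ∞} (h : 3 ≤ l) : einv l ≤ 1 / 3 := by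
  cases l with
  | top => norm_num
  | coe k =>
    have hk : (3 : ℝ) ≤ k := by exact_mod_cast h
    rw [einv_coe, one_div]
    exact inv_anti₀ (by norm_num) hk

lemma einv_eq_third_or_le_quarter {l : ℕ∞} (h : 3 ≤ l) : einv l = 1 / 3 ∨ einv l ≤ 1 / 4 := by
  cases l with
  | top => norm_num
  | coe k =>
    obtain rfl | hk : k = 3 ∨ 4 ≤ k := by
      have : 3 ≤ k := by exact_mod_cast h
      omega
    · left
      rw [einv_coe]
      norm_num
    · have hk : (4 : ℝ) ≤ k := by exact_mod_cast hk
      refine Or.inr ?_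
      rw [einv_coe, one_div]
      exact inv_anti₀ (by norm_num) hk

lemma natCast_inv_add_inv_le_of_lt_half {p q : ℕ} (hp : 3 ≤ p) (hq : 3 ≤ q)
    (h : (p : ℝ)⁻¹ + (q : ℝ)⁻¹ < 1 / 2) : (p : ℝ)⁻¹ + (q : ℝ)⁻¹ ≤ 10 / 21 := by
  have hp₀ : (p : ℝ) ≠ 0 := by positivity
  have hq₀ : (q : ℝ) ≠ 0 := by positivity
  rw [inv_add_inv hp₀ hq₀, div_lt_iff₀ (by positivity)] at h
  rw [inv_add_inv hp₀ hq₀, div_le_iff₀ (by positivity)]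
  have hpq : 2 * (p + q) < p * q := by exact_mod_cast (by linarith : (2 * (p + q) : ℝ) < p * q)
  -- By integrality the strict inequality gains `1`.
  have hpq' : (2 * (p + q) + 1 : ℝ) ≤ p * q := by exact_mod_cast hpq
  have hp3 : (3 : ℝ) ≤ p := by exact_mod_cast hp
  have hq3 : (3 : ℝ) ≤ q := by exact_mod_cast hq
  nlinarith [mul_nonneg (sub_nonneg.2 hp3) (sub_nonneg.2 hq3)]

lemma einv_add_einv_le_of_lt_half {a b : ℕ∞} (ha : 3 ≤ a) (hb : 3 ≤ b)
    (h : einv a + einv b < 1 / 2) : einv a + einv b ≤ 10 / 21 := by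
  cases a with
  | top => linarith [einv_le_third hb, einv_top]
  | coe p =>
    cases b with
    | top => linarith [einv_le_third ha, einv_top]
    | coe q =>
      exact natCast_inv_add_inv_le_of_lt_half (by exact_mod_cast ha) (by exact_mod_cast hb) h

lemma einv_add_einv_add_einv_le_of_lt_one {a b c : ℕ∞} (ha : 3 ≤ a) (hb : 3 ≤ b) (hc : 3 ≤ c)
    (h : einv a + einv b + einv c < 1) : einv a + einv b + einv c ≤ 11 / 12 := by
  rcases einv_eq_third_or_le_quarter ha with ha | ha <;>
  rcases einv_eq_third_or_le_quarter hb with hb | hb <;>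
  rcases einv_eq_third_or_le_quarter hc with hc | hc <;>
  linarith

lemma sum_einv_le_card_div_three {m : ℕ} {l : Fin m → ℕ∞} (hl : ∀ i, 3 ≤ l i) :
    ∑ i, einv (l i) ≤ m / 3 := by
  calc ∑ i, einv (l i) ≤ ∑ _i : Fin m, (1 / 3 : ℝ) :=
        Finset.sum_le_sum fun i _ ↦ einv_le_third (hl i)
    _ = m / 3 := by simp [div_eq_mul_inv]

lemma sum_einv_le_of_lt {m : ℕ} (hm : 2 ≤ m) {l : Fin m → ℕ∞} (hl : ∀ i, 3 ≤ l i)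
    (h : ∑ i, einv (l i) < ((m : ℝ) - 1) / 2) : ∑ i, einv (l i) ≤ ((m : ℝ) - 1) / 2 - 1 / 42 := by
  obtain rfl | rfl | hm : m = 2 ∨ m = 3 ∨ 4 ≤ m := by omega
  · rw [Fin.sum_univ_two] at h ⊢
    norm_num at h ⊢
    linarith [einv_add_einv_le_of_lt_half (hl 0) (hl 1) (by linarith)]
  · rw [Fin.sum_univ_three] at h ⊢
    norm_num at h ⊢
    linarith [einv_add_einv_add_einv_le_of_lt_one (hl 0) (hl 1) (hl 2) (by linarith)]
  · have hm : (4 : ℝ) ≤ m := by exact_mod_cast hm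
    linarith [sum_einv_le_card_div_three hl]

/-- If `n ≥ 3`, `l₁, …, lₙ ∈ ℕ ∪ {∞}` all satisfy `lᵢ ≥ 3`, at least one `lᵢ = ∞`,
and the curvature `κ = 1 − n/2 + Σᵢ 1/lᵢ` (with `1/∞ = 0`) is strictly negative,
then `κ ≤ −1/42`. -/
theorem stmt_2 (n : ℕ) (hn : 3 ≤ n) (l : Fin n → ℕ∞) (hl : ∀ i, 3 ≤ l i)
    (hinf : ∃ i, l i = ⊤)
    (hneg : 1 - (n : ℝ) / 2 + ∑ i, einv (l i) < 0) :
    1 - (n : ℝ) / 2 + ∑ i, einv (l i) ≤ -1 / 42 := by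
  obtain ⟨i₀, hi₀⟩ := hinf
  obtain ⟨m, rfl⟩ : ∃ m, n = m + 1 := ⟨n - 1, by omega⟩
  rw [Fin.sum_univ_succAbove _ i₀, hi₀, einv_top, zero_add] at hneg ⊢
  push_cast at hneg ⊢
  have := sum_einv_le_of_lt (by omega) (fun i ↦ hl (i₀.succAbove i)) (by linarith)
  linarith
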